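/- arXiv:1210.2380 — 2 statements merged into one kernel-verified Lean document; each statement's English description precedes it below -/
import Mathlib

section
/- Let N = 2^p for p ∈ ℕ. For every nonzero frequency k with -N/2+1 ≤ k ≤ N/2, every e ∈ {0,1}, every 0 ≤ n < p, and every 0 ≤ ℓ < 2^n, one has |⟨φ_k, h^e_{n,ℓ}⟩| ≤ min(6·2^{n/2}/|k|, 3π·2^{-n/2}). -/
/-! The conjugated Fourier vector is the geometric progression `t ↦ 2^{-p/2} z^t` with
`z = e^{-2πik/2^p}`, and the Haar block is `2^{(n-p)/2}` resp. `±2^{(n-p)/2}` on two adjacent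
windows of length `m = 2^{p-n-1}`. Hence the inner product is `2^{n/2-p} z^a (1 ± z^m) S` with
`S = ∑_{i<m} z^i`, and both bounds come from the geometric sum: `‖S‖ ≤ m` gives `2^{-n/2}`,
while `‖S‖ ≤ 2/‖z - 1‖ ≤ 2^p/(2|k|)`, by Jordan's inequality `sin x ≥ 2x/π`, gives `2^{n/2}/|k|`. -/

open Complex Real Finset

noncomputable def haarBlock (p n ℓ e t : ℕ) : ℂ :=
  if ℓ * 2 ^ (p - n) ≤ t ∧ t < ℓ * 2 ^ (p - n) + 2 ^ (p - n - 1) then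
    (((2 : ℝ) ^ (((n : ℝ) - p) / 2) : ℝ) : ℂ)
  else if ℓ * 2 ^ (p - n) + 2 ^ (p - n - 1) ≤ t ∧ t < (ℓ + 1) * 2 ^ (p - n) then
    (-1 : ℂ) ^ e * (((2 : ℝ) ^ (((n : ℝ) - p) / 2) : ℝ) : ℂ)
  else 0

noncomputable def fourierVec (p : ℕ) (k : ℤ) (t : ℕ) : ℂ :=
  ((1 / Real.sqrt (2 ^ p) : ℝ) : ℂ) *
    Complex.exp (2 * π * Complex.I * t * k / 2 ^ p)

lemma norm_geom_sum_le {R : Type*} [SeminormedRing R] [NormOneClass R] {z : R} (hz : ‖z‖ ≤ 1)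
    (m : ℕ) : ‖∑ i ∈ range m, z ^ i‖ ≤ m :=
  calc ‖∑ i ∈ range m, z ^ i‖ ≤ ∑ i ∈ range m, ‖z ^ i‖ := norm_sum_le _ _
    _ ≤ ∑ _i ∈ range m, (1 : ℝ) := sum_le_sum fun i _ ↦
        (norm_pow_le z i).trans (pow_le_one₀ (norm_nonneg z) hz)
    _ = m := by simp

lemma norm_geom_sum_le_two_div {K : Type*} [NormedField K] {z : K} (hz : ‖z‖ ≤ 1) (hz1 : z ≠ 1)
    (m : ℕ) : ‖∑ i ∈ range m, z ^ i‖ ≤ 2 / ‖z - 1‖ := by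
  rw [geom_sum_eq hz1, norm_div]
  gcongr
  calc ‖z ^ m - 1‖ ≤ ‖z ^ m‖ + ‖(1 : K)‖ := norm_sub_le _ _
    _ ≤ 1 + 1 := by
        gcongr; exacts [(norm_pow_le z m).trans (pow_le_one₀ (norm_nonneg z) hz), norm_one.le]
    _ = 2 := by norm_num

lemma two_div_pi_mul_abs_le_norm_exp_I_mul_ofReal_sub_one {x : ℝ} (hx : |x| ≤ π) :
    2 / π * |x| ≤ ‖Complex.exp (I * x) - 1‖ := by
  have hx2 : |x / 2| ≤ π / 2 := by rw [abs_div, abs_two]; linarith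
  rw [norm_exp_I_mul_ofReal_sub_one, norm_mul, Real.norm_eq_abs, Real.norm_eq_abs, abs_two,
    abs_sin_eq_sin_abs_of_abs_le_pi (by linarith [pi_pos])]
  calc 2 / π * |x| = 2 * (2 / π * |x / 2|) := by rw [abs_div, abs_two]; ring
    _ ≤ 2 * Real.sin |x / 2| := by gcongr; exact mul_le_sin (abs_nonneg _) hx2

section haarBlock

variable {p n ℓ i t : ℕ} (e : ℕ)

lemma haarBlock_first_half (hi : i < 2 ^ (p - n - 1)) :
    haarBlock p n ℓ e (ℓ * 2 ^ (p - n) + i) = ((2 : ℝ) ^ (((n : ℝ) - p) / 2) : ℝ) := by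
  rw [haarBlock, if_pos (by omega)]

lemma haarBlock_second_half (hn : n < p) (hi : i < 2 ^ (p - n - 1)) :
    haarBlock p n ℓ e (ℓ * 2 ^ (p - n) + 2 ^ (p - n - 1) + i) =
      (-1 : ℂ) ^ e * ((2 : ℝ) ^ (((n : ℝ) - p) / 2) : ℝ) := by
  have h := mul_pow_sub_one (Nat.sub_ne_zero_of_lt hn) 2
  rw [haarBlock, if_neg (by omega), if_pos (by rw [add_one_mul, ← h]; omega)]

lemma haarBlock_eq_zero (ht : t < ℓ * 2 ^ (p - n) ∨ (ℓ + 1) * 2 ^ (p - n) ≤ t) :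
    haarBlock p n ℓ e t = 0 := by
  have hhalf : 2 ^ (p - n - 1) ≤ 2 ^ (p - n) := Nat.pow_le_pow_right two_pos (Nat.sub_le _ _)
  rw [add_one_mul] at ht
  rw [haarBlock, add_one_mul, if_neg, if_neg] <;>
    rintro ⟨h₁, h₂⟩ <;> rcases ht with ht | ht <;> linarith [Nat.zero_le (2 ^ (p - n - 1))]

lemma sum_mul_haarBlock (hn : n < p) (hℓ : ℓ < 2 ^ n) (f : ℕ → ℂ) :
    ∑ t ∈ range (2 ^ p), f t * haarBlock p n ℓ e t =
      ((2 : ℝ) ^ (((n : ℝ) - p) / 2) : ℝ) *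
        (∑ i ∈ range (2 ^ (p - n - 1)), f (ℓ * 2 ^ (p - n) + i) +
          (-1 : ℂ) ^ e * ∑ i ∈ range (2 ^ (p - n - 1)),
            f (ℓ * 2 ^ (p - n) + 2 ^ (p - n - 1) + i)) := by
  set a := ℓ * 2 ^ (p - n) with ha
  set m := 2 ^ (p - n - 1)
  have hm : 2 ^ (p - n) = m + m := by rw [← two_mul, mul_pow_sub_one (Nat.sub_ne_zero_of_lt hn)]
  have hend : (ℓ + 1) * 2 ^ (p - n) ≤ 2 ^ p :=
    calc (ℓ + 1) * 2 ^ (p - n) ≤ 2 ^ n * 2 ^ (p - n) := Nat.mul_le_mul_right _ hℓ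
      _ = 2 ^ p := by rw [← pow_add, Nat.add_sub_cancel' hn.le]
  have hsupp : ∑ t ∈ range (2 ^ p), f t * haarBlock p n ℓ e t =
      ∑ t ∈ Ico a (a + m + m), f t * haarBlock p n ℓ e t := by
    rw [add_one_mul, ← ha, hm, ← add_assoc] at hend
    refine (sum_subset (fun t ht ↦ ?_) fun t _ ht ↦ ?_).symm
    · simp only [mem_Ico, mem_range] at ht ⊢; omega
    · rw [haarBlock_eq_zero e (by rw [add_one_mul, ← ha, hm]; simp only [mem_Ico] at ht; omega),
        mul_zero]
  rw [hsupp, ← sum_Ico_consecutive _ (Nat.le_add_right a m) (Nat.le_add_right _ m),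
    sum_Ico_eq_sum_range, sum_Ico_eq_sum_range, Nat.add_sub_cancel_left, Nat.add_sub_cancel_left,
    mul_add, mul_sum, mul_sum, mul_sum]
  congr 1 <;> refine sum_congr rfl fun i hi ↦ ?_
  · rw [haarBlock_first_half e (mem_range.mp hi), mul_comm]
  · rw [haarBlock_second_half e hn (mem_range.mp hi)]; ring

end haarBlock

lemma norm_geom_sum_exp_I_mul_ofReal_le {x : ℝ} (hx₀ : x ≠ 0) (hx : |x| ≤ π) (m : ℕ) :
    ‖∑ i ∈ range m, Complex.exp (I * x) ^ i‖ ≤ π / |x| := by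
  have hjordan := two_div_pi_mul_abs_le_norm_exp_I_mul_ofReal_sub_one hx
  have hpos : 0 < 2 / π * |x| := by positivity
  have hz : Complex.exp (I * x) ≠ 1 := fun h ↦ by simp [h] at hjordan; linarith
  calc ‖∑ i ∈ range m, Complex.exp (I * x) ^ i‖ ≤ 2 / ‖Complex.exp (I * x) - 1‖ :=
        norm_geom_sum_le_two_div (norm_exp_I_mul_ofReal x).le hz m
    _ ≤ 2 / (2 / π * |x|) := by gcongr
    _ = π / |x| := by field_simp

lemma starRingEnd_fourierVec (p : ℕ) (k : ℤ) (t : ℕ) :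
    starRingEnd ℂ (fourierVec p k t) =
      ((1 / √(2 ^ p) : ℝ) : ℂ) * Complex.exp (I * ↑(-(2 * π * k / 2 ^ p))) ^ t := by
  rw [fourierVec, map_mul, conj_ofReal, ← Complex.exp_conj, ← Complex.exp_nat_mul]
  congr 2
  simp only [map_div₀, map_mul, conj_I, map_pow, map_ofNat, conj_natCast, map_intCast, conj_ofReal]
  push_cast
  ring

lemma two_rpow_sub_div_two_mul_one_div_sqrt (n p : ℕ) :
    (2 : ℝ) ^ (((n : ℝ) - p) / 2) * (1 / √(2 ^ p)) = 2 ^ ((n : ℝ) / 2) / 2 ^ p := by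
  have hsqrt : √(2 ^ p) = (2 : ℝ) ^ ((p : ℝ) / 2) := by
    rw [sqrt_eq_rpow, ← rpow_natCast, ← rpow_mul zero_le_two]; ring_nf
  rw [hsqrt, ← rpow_natCast, one_div, ← rpow_neg zero_le_two, ← rpow_add two_pos,
    ← rpow_sub two_pos]
  ring_nf

lemma norm_sum_starRingEnd_fourierVec_mul_haarBlock_le {p n ℓ : ℕ} (e : ℕ) (hn : n < p)
    (hℓ : ℓ < 2 ^ n) (k : ℤ) :
    ‖∑ t ∈ range (2 ^ p), starRingEnd ℂ (fourierVec p k t) * haarBlock p n ℓ e t‖ ≤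
      2 ^ ((n : ℝ) / 2) / 2 ^ p *
        (2 * ‖∑ i ∈ range (2 ^ (p - n - 1)), Complex.exp (I * ↑(-(2 * π * k / 2 ^ p))) ^ i‖) := by
  set z := Complex.exp (I * ↑(-(2 * π * k / 2 ^ p)))
  set S := ∑ i ∈ range (2 ^ (p - n - 1)), z ^ i
  have hz : ‖z‖ = 1 := norm_exp_I_mul_ofReal _
  have hwindow (s : ℕ) : ∑ i ∈ range (2 ^ (p - n - 1)), starRingEnd ℂ (fourierVec p k (s + i)) =
      ((1 / √(2 ^ p) : ℝ) : ℂ) * z ^ s * S := by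
    simp only [starRingEnd_fourierVec, pow_add, mul_sum, S, z, mul_assoc]
  rw [sum_mul_haarBlock e hn hℓ, hwindow, hwindow]
  calc _ ≤ ‖(((2 : ℝ) ^ (((n : ℝ) - p) / 2) : ℝ) : ℂ)‖ * (‖((1 / √(2 ^ p) : ℝ) : ℂ)‖ * ‖S‖ +
          ‖((1 / √(2 ^ p) : ℝ) : ℂ)‖ * ‖S‖) := by
        rw [norm_mul]
        gcongr
        refine (norm_add_le _ _).trans_eq ?_
        simp [hz]
    _ = _ := by
        simp only [norm_real, Real.norm_eq_abs, abs_of_pos (rpow_pos_of_pos two_pos _),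
          abs_of_nonneg (by positivity : 0 ≤ 1 / √(2 ^ p))]
        rw [← two_rpow_sub_div_two_mul_one_div_sqrt]
        ring

lemma abs_intCast_le_two_pow_div_two {p : ℕ} (hp : p ≠ 0) {k : ℤ} (hk₁ : -(2 ^ p : ℤ) / 2 ≤ k)
    (hk₂ : k ≤ 2 ^ p / 2) : |(k : ℝ)| ≤ 2 ^ p / 2 := by
  have h := mul_pow_sub_one hp (2 : ℤ)
  rw [← h] at hk₁ hk₂
  have hk : |k| ≤ 2 ^ (p - 1) := abs_le.mpr ⟨by omega, by omega⟩
  rw [← mul_pow_sub_one hp (2 : ℝ), mul_div_cancel_left₀ _ two_ne_zero, ← Int.cast_abs]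
  exact_mod_cast hk

theorem stmt_4_general (p n ℓ e : ℕ) (hn : n < p) (hℓ : ℓ < 2 ^ n)
    (k : ℤ) (hk : k ≠ 0) (hk1 : -(2 ^ p : ℤ) / 2 + 1 ≤ k) (hk2 : k ≤ 2 ^ p / 2) :
    ‖∑ t ∈ Finset.range (2 ^ p),
        (starRingEnd ℂ) (fourierVec p k t) * haarBlock p n ℓ e t‖ ≤
      min (6 * (2 : ℝ) ^ ((n : ℝ) / 2) / |(k : ℝ)|)
        (3 * π * (2 : ℝ) ^ (-(n : ℝ) / 2)) := by
  have hk_le := abs_intCast_le_two_pow_div_two (by omega : p ≠ 0) (by omega) hk2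
  have hk_pos : 0 < |(k : ℝ)| := by positivity
  set x := -(2 * π * k / 2 ^ p)
  have hx : |x| = 2 * π * |(k : ℝ)| / 2 ^ p := by
    rw [abs_neg, abs_div, abs_mul, abs_of_pos two_pi_pos,
      abs_of_pos (by positivity : (0 : ℝ) < 2 ^ p)]
  have hx₀ : x ≠ 0 := by simp [x, hk, pi_ne_zero]
  have hxπ : |x| ≤ π := by
    rw [hx, div_le_iff₀ (by positivity)]; nlinarith [pi_pos]
  have hinner := norm_sum_starRingEnd_fourierVec_mul_haarBlock_le e hn hℓ k
  refine le_min ?_ ?_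
  · calc _ ≤ (2 : ℝ) ^ ((n : ℝ) / 2) / 2 ^ p * (2 * (π / |x|)) := by
          grw [hinner, norm_geom_sum_exp_I_mul_ofReal_le hx₀ hxπ]
      _ = 2 ^ ((n : ℝ) / 2) / |(k : ℝ)| := by rw [hx]; field_simp
      _ ≤ 6 * 2 ^ ((n : ℝ) / 2) / |(k : ℝ)| := by
          gcongr; linarith [rpow_pos_of_pos two_pos ((n : ℝ) / 2)]
  · calc _ ≤ (2 : ℝ) ^ ((n : ℝ) / 2) / 2 ^ p * (2 * (2 ^ (p - n - 1) : ℕ)) := by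
          grw [hinner, norm_geom_sum_le (norm_exp_I_mul_ofReal x).le]
      _ = (2 : ℝ) ^ (-(n : ℝ) / 2) := by
          rw [Nat.cast_pow, Nat.cast_ofNat, mul_pow_sub_one (Nat.sub_ne_zero_of_lt hn),
            ← rpow_natCast, ← rpow_natCast, Nat.cast_sub hn.le, ← rpow_sub two_pos,
            ← rpow_add two_pos]
          ring_nf
      _ ≤ 3 * π * 2 ^ (-(n : ℝ) / 2) :=
          le_mul_of_one_le_left (by positivity) (by nlinarith [pi_gt_three])

/-- Univariate local incoherence: for every nonzero frequency `k` with
`-N/2+1 ≤ k ≤ N/2` (`N = 2^p`), every `e ∈ {0,1}`, `0 ≤ n < p`, `0 ≤ ℓ < 2^n`,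
one has `|⟨φ_k, h^e_{n,ℓ}⟩| ≤ min(6·2^{n/2}/|k|, 3π·2^{-n/2})`. -/
theorem stmt_4 (p n ℓ e : ℕ) (hn : n < p) (hℓ : ℓ < 2 ^ n) (he : e ≤ 1)
    (k : ℤ) (hk : k ≠ 0) (hk1 : -(2 ^ p : ℤ) / 2 + 1 ≤ k) (hk2 : k ≤ 2 ^ p / 2) :
    ‖∑ t ∈ Finset.range (2 ^ p),
        (starRingEnd ℂ) (fourierVec p k t) * haarBlock p n ℓ e t‖ ≤
      min (6 * (2 : ℝ) ^ ((n : ℝ) / 2) / |(k : ℝ)|)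
        (3 * π * (2 : ℝ) ^ (-(n : ℝ) / 2)) :=
  stmt_4_general p n ℓ e hn hℓ k hk hk1 hk2
end

section
/- Let N = 2^p. For any adjacent pixel pair (t_1,t_2) and (t_1,t_2+1) in [N]×[N], the number of bivariate Haar basis elements h^e_{n,ℓ} with h^e_{n,ℓ}(t_1,t_2+1) ≠ h^e_{n,ℓ}(t_1,t_2) is at most 6p. -/
/-!
A wavelet of scale `n` vanishes off its dyadic square, so if it changes value across the edge
between `(t₁, t₂)` and `(t₁, t₂ + 1)` its square contains one of these two pixels. Hence
`ℓ₁ = ⌊t₁ / 2^(p-n)⌋` and `ℓ₂ = ⌊(t₂ + b) / 2^(p-n)⌋` with `b ∈ {0, 1}`: at each of the `p`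
scales there are at most `3 · 2` such wavelets.
-/

open Finset

noncomputable def haar2 (p n ℓ₁ ℓ₂ e₁ e₂ t₁ t₂ : ℕ) : ℂ :=
  haarBlock p n ℓ₁ e₁ t₁ * haarBlock p n ℓ₂ e₂ t₂

lemma div_eq_of_haarBlock_ne_zero {p n ℓ e t : ℕ} (h : haarBlock p n ℓ e t ≠ 0) :
    t / 2 ^ (p - n) = ℓ := by
  have hhalf : 2 ^ (p - n - 1) ≤ 2 ^ (p - n) := Nat.pow_le_pow_right two_pos (Nat.sub_le _ _)
  unfold haarBlock at h
  split_ifs at h with hleft hright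
  · exact Nat.div_eq_of_lt_le hleft.1 (by rw [add_one_mul]; omega)
  · exact Nat.div_eq_of_lt_le ((Nat.le_add_right _ _).trans hright.1) hright.2
  · exact absurd rfl h

lemma haar2_indices_of_succ_ne {p n ℓ₁ ℓ₂ e₁ e₂ t₁ t₂ : ℕ}
    (h : haar2 p n ℓ₁ ℓ₂ e₁ e₂ t₁ (t₂ + 1) ≠ haar2 p n ℓ₁ ℓ₂ e₁ e₂ t₁ t₂) :
    ℓ₁ = t₁ / 2 ^ (p - n) ∧ ∃ b < 2, ℓ₂ = (t₂ + b) / 2 ^ (p - n) := by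
  have hfirst : haarBlock p n ℓ₁ e₁ t₁ ≠ 0 := fun h0 => h (by simp [haar2, h0])
  have hsecond : haarBlock p n ℓ₂ e₂ (t₂ + 1) ≠ haarBlock p n ℓ₂ e₂ t₂ :=
    fun h0 => h (by simp [haar2, h0])
  refine ⟨(div_eq_of_haarBlock_ne_zero hfirst).symm, ?_⟩
  by_cases hzero : haarBlock p n ℓ₂ e₂ t₂ = 0
  · exact ⟨1, one_lt_two,
      (div_eq_of_haarBlock_ne_zero fun h0 => hsecond (h0.trans hzero.symm)).symm⟩
  · exact ⟨0, two_pos, (div_eq_of_haarBlock_ne_zero hzero).symm⟩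

theorem stmt_9_general (p t₁ t₂ : ℕ) :
    ((((Finset.range 2 ×ˢ Finset.range 2) ×ˢ
        Finset.range p ×ˢ Finset.range (2 ^ p) ×ˢ Finset.range (2 ^ p)).filter
      (fun x : (ℕ × ℕ) × ℕ × ℕ × ℕ =>
        ¬(x.1.1 = 0 ∧ x.1.2 = 0) ∧
        x.2.2.1 < 2 ^ x.2.1 ∧ x.2.2.2 < 2 ^ x.2.1 ∧
        haar2 p x.2.1 x.2.2.1 x.2.2.2 x.1.1 x.1.2 t₁ (t₂ + 1) ≠
          haar2 p x.2.1 x.2.2.1 x.2.2.2 x.1.1 x.1.2 t₁ t₂)).card : ℕ) ≤ 6 * p := by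
  set types := (Finset.range 2 ×ˢ Finset.range 2).filter fun e : ℕ × ℕ => ¬(e.1 = 0 ∧ e.2 = 0)
  have htypes : types.card = 3 := by decide
  let candidate : (ℕ × ℕ) × ℕ × ℕ → (ℕ × ℕ) × ℕ × ℕ × ℕ := fun ⟨e, n, b⟩ =>
    (e, n, t₁ / 2 ^ (p - n), (t₂ + b) / 2 ^ (p - n))
  calc _ ≤ ((types ×ˢ Finset.range p ×ˢ Finset.range 2).image candidate).card :=
        Finset.card_le_card ?_
    _ ≤ (types ×ˢ Finset.range p ×ˢ Finset.range 2).card := Finset.card_image_le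
    _ = 6 * p := by simp only [Finset.card_product, htypes, Finset.card_range]; ring
  rintro ⟨e, n, ℓ₁, ℓ₂⟩ hx
  simp only [Finset.mem_filter, Finset.mem_product, Finset.mem_range] at hx
  obtain ⟨⟨he, hn, -, -⟩, htype, -, -, hjump⟩ := hx
  obtain ⟨rfl, b, hb, rfl⟩ := haar2_indices_of_succ_ne hjump
  have hdomain : ((e, n, b) : (ℕ × ℕ) × ℕ × ℕ) ∈ types ×ˢ Finset.range p ×ˢ Finset.range 2 := by
    simp only [types, Finset.mem_product, Finset.mem_filter, Finset.mem_range]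
    exact ⟨⟨he, htype⟩, hn, hb⟩
  exact Finset.mem_image_of_mem candidate hdomain

/-- For `N = 2^p` and any adjacent pixel pair `(t₁,t₂)`, `(t₁,t₂+1)`, at most `6p`
bivariate Haar basis elements `h^e_{n,ℓ}` (indexed by `e ∈ {(0,1),(1,0),(1,1)}`,
`0 ≤ n < p`, `0 ≤ ℓ₁,ℓ₂ < 2^n`) change value across that edge. -/
theorem stmt_9 (p t₁ t₂ : ℕ) (ht₁ : t₁ < 2 ^ p) (ht₂ : t₂ + 1 < 2 ^ p) :
    ((((Finset.range 2 ×ˢ Finset.range 2) ×ˢ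
        Finset.range p ×ˢ Finset.range (2 ^ p) ×ˢ Finset.range (2 ^ p)).filter
      (fun x : (ℕ × ℕ) × ℕ × ℕ × ℕ =>
        ¬(x.1.1 = 0 ∧ x.1.2 = 0) ∧
        x.2.2.1 < 2 ^ x.2.1 ∧ x.2.2.2 < 2 ^ x.2.1 ∧
        haar2 p x.2.1 x.2.2.1 x.2.2.2 x.1.1 x.1.2 t₁ (t₂ + 1) ≠
          haar2 p x.2.1 x.2.2.1 x.2.2.2 x.1.1 x.1.2 t₁ t₂)).card : ℕ) ≤ 6 * p :=
  stmt_9_general p t₁ t₂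
end
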